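/- arXiv:1410.2673 — 7 statements merged into one kernel-verified Lean document; each statement's English description precedes it below -/
import Mathlib

section
/- Let d ≥ 3 and let u, v, u′, v′ be positive reals with d−1 ≤ u/v ≤ u′/v′. Then for every exponent vector (a₀,…,a₄) of nonnegative integers summing to d with a₀a₄ = 0, if (a₀−a₄)u + (a₁−a₃)v < 0 then (a₀−a₄)u′ + (a₁−a₃)v′ < 0. -/
theorem stmt_4 (d : ℕ) (hd : 3 ≤ d) (u v u' v' : ℝ)
    (hv : 0 < v) (hv' : 0 < v') (hu : 0 < u) (hu' : 0 < u')
    (h1 : (d : ℝ) - 1 ≤ u / v) (h2 : u / v ≤ u' / v')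
    (a0 a1 a2 a3 a4 : ℕ)
    (hsum : a0 + a1 + a2 + a3 + a4 = d) (hprod : a0 * a4 = 0)
    (hw : ((a0 : ℝ) - a4) * u + ((a1 : ℝ) - a3) * v < 0) :
    ((a0 : ℝ) - a4) * u' + ((a1 : ℝ) - a3) * v' < 0 := by
  have huv : ((d : ℝ) - 1) * v ≤ u := (le_div_iff₀ hv).mp h1
  have ha0 : a0 = 0 := by
    rcases Nat.mul_eq_zero.mp hprod with h | h
    · exact h
    · by_contra h0
      have h1' : (1 : ℝ) ≤ (a0 : ℝ) := by
        exact_mod_cast Nat.one_le_iff_ne_zero.mpr h0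
      have ha3 : (a3 : ℝ) ≤ (d : ℝ) - 1 := by
        have : a3 + 1 ≤ d := by omega
        have := (Nat.cast_le (α := ℝ)).mpr this
        push_cast at this; linarith
      have ha4 : (a4 : ℝ) = 0 := by exact_mod_cast h
      have ha1 : (0 : ℝ) ≤ (a1 : ℝ) := Nat.cast_nonneg a1
      nlinarith
  have ha0r : (a0 : ℝ) = 0 := by exact_mod_cast ha0
  rw [ha0r] at hw ⊢
  have q1 : ((a1 : ℝ) - a3) < (a4 : ℝ) * u / v := by
    rw [lt_div_iff₀ hv]; linarith
  have q2 : (a4 : ℝ) * u / v ≤ (a4 : ℝ) * u' / v' := by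
    rw [mul_div_assoc, mul_div_assoc]
    exact mul_le_mul_of_nonneg_left h2 (Nat.cast_nonneg a4)
  have q3 : ((a1 : ℝ) - a3) < (a4 : ℝ) * u' / v' := lt_of_lt_of_le q1 q2
  rw [lt_div_iff₀ hv'] at q3
  linarith
end

section
/- Let d = 2c+1 ≥ 3 be odd. The set of exponent vectors (a₀,…,a₄) of nonnegative integers summing to d with a₀a₄ = 0 and weight (d−1)(a₀−a₄) + (a₁−a₃) = 0 is exactly {(1,0,0,d−1,0), (0,d−1,0,0,1)} ∪ {(0, k, d−2k, k, 0) : 0 ≤ k ≤ c}. -/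
theorem stmt_7 (c : ℕ) (hc : 1 ≤ c) (a0 a1 a2 a3 a4 : ℕ) :
    (a0 + a1 + a2 + a3 + a4 = 2 * c + 1 ∧ a0 * a4 = 0 ∧
        (2 * c : ℤ) * ((a0 : ℤ) - a4) + ((a1 : ℤ) - a3) = 0) ↔
    ((a0, a1, a2, a3, a4) = (1, 0, 0, 2 * c, 0) ∨
     (a0, a1, a2, a3, a4) = (0, 2 * c, 0, 0, 1) ∨
     ∃ k, k ≤ c ∧ (a0, a1, a2, a3, a4) = (0, k, 2 * c + 1 - 2 * k, k, 0)) := by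
  simp only [Prod.mk.injEq]
  constructor
  · rintro ⟨hsum, hprod, hw⟩
    rcases Nat.mul_eq_zero.mp hprod with h0 | h4
    · subst h0
      have key : a1 = a3 + 2 * (c * a4) := by
        have : (a1 : ℤ) = (a3 : ℤ) + 2 * ((c * a4 : ℕ) : ℤ) := by push_cast at hw ⊢; linear_combination hw
        exact_mod_cast this
      rcases Nat.eq_zero_or_pos a4 with h | h
      · subst h
        right; right
        exact ⟨a1, by omega, by omega⟩
      · have ha4 : a4 ≤ 1 := by
          by_contra hh
          push_neg at hh
          have := Nat.mul_le_mul_left c (show 2 ≤ a4 by omega)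
          omega
        have : a4 = 1 := by omega
        subst this
        right; left
        omega
    · subst h4
      have key : a3 = a1 + 2 * (c * a0) := by
        have : (a3 : ℤ) = (a1 : ℤ) + 2 * ((c * a0 : ℕ) : ℤ) := by push_cast at hw ⊢; linear_combination -hw
        exact_mod_cast this
      rcases Nat.eq_zero_or_pos a0 with h | h
      · subst h
        right; right
        exact ⟨a1, by omega, by omega⟩
      · have ha0 : a0 ≤ 1 := by
          by_contra hh
          push_neg at hh
          have := Nat.mul_le_mul_left c (show 2 ≤ a0 by omega)
          omega
        have : a0 = 1 := by omega
        subst this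
        left
        omega
  · rintro (⟨h0, h1, h2, h3, h4⟩ | ⟨h0, h1, h2, h3, h4⟩ | ⟨k, hk, h0, h1, h2, h3, h4⟩) <;>
      subst_vars <;> exact ⟨by omega, by omega, by push_cast; ring⟩
end

section
/- Let d ≥ 5 and u ≥ v > 0 with u/v < d−1. Then every exponent vector (a₀,…,a₄) of nonnegative integers summing to d with a₀a₄ = 0 and weight (a₀−a₄)u + (a₁−a₃)v ≤ 0 satisfies a₀ ≤ d−3. -/
theorem stmt_10 (d : ℕ) (hd : 5 ≤ d) (u v : ℝ) (huv : v ≤ u) (hv : 0 < v)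
    (hslope : u / v < (d : ℝ) - 1) (a0 a1 a2 a3 a4 : ℕ)
    (hsum : a0 + a1 + a2 + a3 + a4 = d) (hprod : a0 * a4 = 0)
    (hw : ((a0 : ℝ) - a4) * u + ((a1 : ℝ) - a3) * v ≤ 0) :
    a0 ≤ d - 3 := by
  by_contra h
  push_neg at h
  have ha0 : d - 2 ≤ a0 := by omega
  have ha0pos : 0 < a0 := by omega
  have ha4 : a4 = 0 := by
    rcases Nat.mul_eq_zero.mp hprod with h' | h' <;> omega
  have ha3 : a3 ≤ 2 := by omega
  have h3 : (3 : ℝ) ≤ (a0 : ℝ) := by exact_mod_cast (by omega : 3 ≤ a0)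
  have h3' : (a3 : ℝ) ≤ 2 := by exact_mod_cast ha3
  have h1 : (0 : ℝ) ≤ (a1 : ℝ) := by positivity
  subst ha4
  push_cast at hw
  nlinarith [mul_le_mul_of_nonneg_left huv (le_of_lt (by linarith : (0:ℝ) < (a0:ℝ)))]
end

section
/- Let d ≥ 4 and u ≥ v > 0 with u/v < d−1. Then every exponent vector (a₀,…,a₄) of nonnegative integers summing to d with a₀a₄ = 0 and strictly negative weight (a₀−a₄)u + (a₁−a₃)v < 0 satisfies a₀ ≤ d−3. -/
theorem stmt_11 (d : ℕ) (hd : 4 ≤ d) (u v : ℝ) (huv : v ≤ u) (hv : 0 < v)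
    (hslope : u / v < (d : ℝ) - 1) (a0 a1 a2 a3 a4 : ℕ)
    (hsum : a0 + a1 + a2 + a3 + a4 = d) (hprod : a0 * a4 = 0)
    (hw : ((a0 : ℝ) - a4) * u + ((a1 : ℝ) - a3) * v < 0) :
    a0 ≤ d - 3 := by
  by_contra h
  push_neg at h
  have ha0 : d - 2 ≤ a0 := by omega
  have ha0pos : 0 < a0 := by omega
  have ha4 : a4 = 0 := by
    rcases Nat.mul_eq_zero.mp hprod with h' | h' <;> omega
  have ha3 : a3 ≤ 2 := by omega
  have h2 : (2 : ℝ) ≤ (a0 : ℝ) := by exact_mod_cast (by omega : 2 ≤ a0)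
  have h3 : (a3 : ℝ) ≤ 2 := by exact_mod_cast ha3
  have h1 : (0 : ℝ) ≤ (a1 : ℝ) := Nat.cast_nonneg _
  subst ha4
  simp only [Nat.cast_zero, sub_zero] at hw
  nlinarith [mul_nonneg h1 hv.le]
end

section
/- Assign weights w(y₁) = 2, w(y₂) = 3, w(y₃) = 4. Then F = (−y₂² − y₁y₃)·q(y₁, y₂, y₃, −y₂² − y₁y₃) + y₃²·l(y₁, y₂, y₃, −y₂² − y₁y₃) + y₃·q′(y₂, y₃, −y₂² − y₁y₃), where q, q′ are arbitrary homogeneous quadratics and l an arbitrary linear form in the indicated variables, has weighted multiplicity at least 10 at the origin. -/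
/-!
Weighted multiplicity is the weighted order of the polynomial viewed as a power series, and that
order is superadditive under products. Substituting series of weighted order `≥ a` into a form of
degree `d` gives order `≥ d • a`. With weights `2, 3, 4` the series `u = -y₂² - y₁y₃` has order
`≥ 6`, so the three summands have order at least `6 + 2 • 2`, `2 • 4 + 1 • 2` and `4 + 2 • 3`.
-/

open MvPolynomial

namespace MvPowerSeries

variable {σ τ R : Type*} [CommRing R] (w : σ → ℕ)

theorem le_weightedOrder_add_of_le {f g : MvPowerSeries σ R} {n : ℕ∞}
    (hf : n ≤ f.weightedOrder w) (hg : n ≤ g.weightedOrder w) : n ≤ (f + g).weightedOrder w :=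
  (le_min hf hg).trans (min_weightedOrder_le_add w)

theorem le_weightedOrder_sub_of_le {f g : MvPowerSeries σ R} {n : ℕ∞}
    (hf : n ≤ f.weightedOrder w) (hg : n ≤ g.weightedOrder w) : n ≤ (f - g).weightedOrder w := by
  rw [sub_eq_add_neg]
  exact le_weightedOrder_add_of_le w hf (by rwa [weightedOrder_neg])

theorem le_weightedOrder_mul_of_le {f g : MvPowerSeries σ R} {a b : ℕ∞}
    (hf : a ≤ f.weightedOrder w) (hg : b ≤ g.weightedOrder w) :
    a + b ≤ (f * g).weightedOrder w :=
  (add_le_add hf hg).trans (le_weightedOrder_mul w)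

theorem le_weightedOrder_pow_of_le {f : MvPowerSeries σ R} {a : ℕ∞}
    (hf : a ≤ f.weightedOrder w) (n : ℕ) : n • a ≤ (f ^ n).weightedOrder w :=
  (nsmul_le_nsmul_right hf n).trans (le_weightedOrder_pow w n)

theorem le_weightedOrder_sum {ι : Type*} {f : ι → MvPowerSeries σ R} {s : Finset ι} {n : ℕ∞}
    (hf : ∀ i ∈ s, n ≤ (f i).weightedOrder w) : n ≤ (∑ i ∈ s, f i).weightedOrder w := by
  classical
  induction s using Finset.induction with
  | empty => simp
  | insert i s hi ih =>
    rw [Finset.sum_insert hi]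
    exact le_weightedOrder_add_of_le w (hf i (Finset.mem_insert_self i s))
      (ih fun j hj => hf j (Finset.mem_insert_of_mem hj))

theorem le_weightedOrder_X (i : σ) : (w i : ℕ∞) ≤ (X i : MvPowerSeries σ R).weightedOrder w := by
  classical
  rw [X_def, weightedOrder_monomial]
  split_ifs <;> simp [Finsupp.weight_single]

theorem le_weightedOrder_aeval {f : τ → MvPowerSeries σ R} {a : ℕ∞}
    (hf : ∀ i, a ≤ (f i).weightedOrder w) {q : MvPolynomial τ R} {d : ℕ}
    (hq : q.IsHomogeneous d) : d • a ≤ (MvPolynomial.aeval f q).weightedOrder w := by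
  rw [MvPolynomial.aeval_def, MvPolynomial.eval₂_eq]
  refine le_weightedOrder_sum w fun m hm => ?_
  have hdeg : m.degree = d := by
    rw [Finsupp.degree_eq_weight_one]
    exact hq (mem_support_iff.mp hm)
  grw [← le_weightedOrder_mul, ← le_weightedOrder_prod, ← hdeg, Finsupp.degree_apply,
    Finset.sum_smul]
  exact le_add_left (Finset.sum_le_sum fun i _ => le_weightedOrder_pow_of_le w (hf i) (m i))

end MvPowerSeries

namespace MvPolynomial

variable {σ τ R : Type*} [CommRing R]

@[norm_cast]
theorem coe_neg (p : MvPolynomial σ R) : ((-p : MvPolynomial σ R) : MvPowerSeries σ R) = -p :=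
  map_neg coeToMvPowerSeries.ringHom p

@[norm_cast]
theorem coe_sub (p q : MvPolynomial σ R) :
    ((p - q : MvPolynomial σ R) : MvPowerSeries σ R) = p - q :=
  map_sub coeToMvPowerSeries.ringHom p q

@[norm_cast]
theorem coe_aeval (f : τ → MvPolynomial σ R) (q : MvPolynomial τ R) :
    ((aeval f q : MvPolynomial σ R) : MvPowerSeries σ R) =
      aeval (fun i => (f i : MvPowerSeries σ R)) q := by
  simpa using comp_aeval_apply f (coeToMvPowerSeries.algHom R) q

theorem le_weight_of_le_weightedOrder_coe (w : σ → ℕ) {p : MvPolynomial σ R} {n : ℕ}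
    (h : n ≤ (p : MvPowerSeries σ R).weightedOrder w) {m : σ →₀ ℕ} (hm : m ∈ p.support) :
    n ≤ Finsupp.weight w m := by
  refine ENat.natCast_le_natCast.mp (h.trans (MvPowerSeries.weightedOrder_le w ?_))
  rwa [coeff_coe, ← mem_support_iff]

end MvPolynomial

section

variable {R : Type*} [CommRing R]

theorem MvPowerSeries.six_le_weightedOrder_neg_sq_sub_mul :
    6 ≤ (-X 1 ^ 2 - X 0 * X 2 : MvPowerSeries (Fin 3) R).weightedOrder ![2, 3, 4] := by
  refine le_weightedOrder_sub_of_le _ ?_ ((le_weightedOrder_mul_of_le _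
    (le_weightedOrder_X _ 0) (le_weightedOrder_X _ 2)).trans' (by decide))
  rw [weightedOrder_neg]
  exact (le_weightedOrder_pow_of_le _ (le_weightedOrder_X _ 1) 2).trans' (by decide)

theorem MvPolynomial.two_le_weightedOrder_coe_args₄ (i : Fin 4) :
    2 ≤ ((![X 0, X 1, X 2, -X 1 ^ 2 - X 0 * X 2] i : MvPolynomial (Fin 3) R) :
      MvPowerSeries (Fin 3) R).weightedOrder ![2, 3, 4] := by
  fin_cases i <;> simp [coe_neg, coe_sub]
  exacts [MvPowerSeries.le_weightedOrder_X _ 0,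
    (MvPowerSeries.le_weightedOrder_X _ 1).trans' (by decide),
    (MvPowerSeries.le_weightedOrder_X _ 2).trans' (by decide),
    MvPowerSeries.six_le_weightedOrder_neg_sq_sub_mul.trans' (by decide)]

theorem MvPolynomial.three_le_weightedOrder_coe_args₃ (i : Fin 3) :
    3 ≤ ((![X 1, X 2, -X 1 ^ 2 - X 0 * X 2] i : MvPolynomial (Fin 3) R) :
      MvPowerSeries (Fin 3) R).weightedOrder ![2, 3, 4] := by
  fin_cases i <;> simp [coe_neg, coe_sub]
  exacts [MvPowerSeries.le_weightedOrder_X _ 1,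
    (MvPowerSeries.le_weightedOrder_X _ 2).trans' (by decide),
    MvPowerSeries.six_le_weightedOrder_neg_sq_sub_mul.trans' (by decide)]

end

theorem stmt_15 (q : MvPolynomial (Fin 4) ℂ) (hq : q.IsHomogeneous 2)
    (l : MvPolynomial (Fin 4) ℂ) (hl : l.IsHomogeneous 1)
    (q' : MvPolynomial (Fin 3) ℂ) (hq' : q'.IsHomogeneous 2) :
    ∀ m ∈ (((-(X 1) ^ 2 - X 0 * X 2) *
            aeval ![X 0, X 1, X 2, -(X 1) ^ 2 - X 0 * X 2] q
        + X 2 ^ 2 * aeval ![X 0, X 1, X 2, -(X 1) ^ 2 - X 0 * X 2] l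
        + X 2 * aeval ![X 1, X 2, -(X 1) ^ 2 - X 0 * X 2] q' :
        MvPolynomial (Fin 3) ℂ)).support,
      10 ≤ 2 * m 0 + 3 * m 1 + 4 * m 2 := by
  open MvPowerSeries in
  intro m hm
  have hweight : Finsupp.weight ![2, 3, 4] m = 2 * m 0 + 3 * m 1 + 4 * m 2 := by
    simp [Finsupp.weight_eq_sum, Fin.sum_univ_three, mul_comm]
  rw [← hweight]
  refine le_weight_of_le_weightedOrder_coe _ ?_ hm
  simp only [coe_add, coe_mul, coe_sub, coe_neg, coe_pow, coe_X, MvPolynomial.coe_aeval,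
    Nat.cast_ofNat]
  have hu := six_le_weightedOrder_neg_sq_sub_mul (R := ℂ)
  have hX2 := le_weightedOrder_X (R := ℂ) ![2, 3, 4] 2
  have h₄ := two_le_weightedOrder_coe_args₄ (R := ℂ)
  have h₃ := three_le_weightedOrder_coe_args₃ (R := ℂ)
  refine le_weightedOrder_add_of_le _ (le_weightedOrder_add_of_le _ ?_ ?_) ?_
  · exact (le_weightedOrder_mul_of_le _ hu (le_weightedOrder_aeval _ h₄ hq)).trans' (by decide)
  · exact (le_weightedOrder_mul_of_le _ (le_weightedOrder_pow_of_le _ hX2 2)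
      (le_weightedOrder_aeval _ h₄ hl)).trans' (by decide)
  · exact (le_weightedOrder_mul_of_le _ hX2 (le_weightedOrder_aeval _ h₃ hq')).trans' (by decide)
end

section
/- Let f be a nonzero holomorphic (or polynomial) function vanishing at 0 ∈ ℂⁿ, assign positive rational weights w(x_i) to the variables, and let w(f) be the weighted multiplicity of f (the minimum of Σᵢ bᵢ·w(xᵢ) over monomials x^b appearing in f). Then the log canonical threshold of f at 0 satisfies c₀(f) ≤ (Σᵢ w(xᵢ)) / w(f). -/
/-!
On the weighted polydisc `P_t = {|zᵢ| ≤ t ^ wᵢ}` every monomial `z ^ b` of `f` has modulus at most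
`t ^ (∑ bᵢ wᵢ) ≤ t ^ w(f)` (for `t ≤ 1`), so `|f| ≤ C t ^ w(f)` there with `C = ∑ |coefficients|`,
while `vol P_t = π ^ n t ^ (2 ∑ wᵢ)`. Hence
`∫_{P_t} |f| ^ (-2c) ≥ C ^ (-2c) π ^ n t ^ (2 ∑ wᵢ - 2 c w(f))`, and this stays bounded
as `t → 0⁺` only if `c ≤ (∑ wᵢ) / w(f)`.
-/

open MeasureTheory Filter Topology Metric

def weightedPolydisc {ι : Type*} (w : ι → ℝ) (t : ℝ) : Set (ι → ℂ) :=
  Set.univ.pi fun i => closedBall 0 (t ^ w i)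

theorem measurableSet_weightedPolydisc {ι : Type*} [Countable ι] (w : ι → ℝ) (t : ℝ) :
    MeasurableSet (weightedPolydisc w t) :=
  .univ_pi fun _ => measurableSet_closedBall

theorem volume_weightedPolydisc {ι : Type*} [Fintype ι] (w : ι → ℝ) {t : ℝ} (ht : 0 < t) :
    volume (weightedPolydisc w t) =
      ENNReal.ofReal (Real.pi ^ Fintype.card ι * t ^ (2 * ∑ i, w i)) := by
  have hball : ∀ i, volume (closedBall (0 : ℂ) (t ^ w i)) =
      ENNReal.ofReal (Real.pi * t ^ (2 * w i)) := fun i => by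
    rw [Complex.volume_closedBall, ← ENNReal.ofReal_pow (by positivity), ← NNReal.coe_real_pi,
      ← ENNReal.ofReal_coe_nnreal, ← ENNReal.ofReal_mul (by positivity), NNReal.coe_real_pi,
      ← Real.rpow_natCast, ← Real.rpow_mul ht.le, mul_comm, Nat.cast_ofNat, mul_comm (w i)]
  rw [weightedPolydisc, volume_pi_pi, Finset.prod_congr rfl fun i _ => hball i,
    ← ENNReal.ofReal_prod_of_nonneg fun i _ => by positivity, Finset.prod_mul_distrib,
    Finset.prod_const, Finset.card_univ, Finset.mul_sum, Real.rpow_sum_of_pos ht]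

theorem eventually_weightedPolydisc_subset {ι : Type*} [Fintype ι] {w : ι → ℝ}
    (hw : ∀ i, 0 < w i) {U : Set (ι → ℂ)} (hU : U ∈ 𝓝 0) :
    ∀ᶠ t in 𝓝[>] 0, weightedPolydisc w t ⊆ U := by
  obtain ⟨ε, hε, hεU⟩ := nhds_basis_closedBall.mem_iff.1 hU
  have hsmall : ∀ i, ∀ᶠ t in 𝓝[>] (0 : ℝ), t ^ w i ≤ ε := fun i => by
    have : Tendsto (fun t : ℝ => t ^ w i) (𝓝 0) (𝓝 0) := by
      simpa [Real.zero_rpow (hw i).ne'] using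
        (Real.continuousAt_rpow_const 0 (w i) (Or.inr (hw i).le)).tendsto
    exact (this.mono_left nhdsWithin_le_nhds).eventually (ge_mem_nhds hε)
  filter_upwards [eventually_all.2 hsmall] with t ht
  refine Set.Subset.trans ?_ hεU
  rw [closedBall_pi _ hε.le]
  exact Set.pi_mono fun i _ => closedBall_subset_closedBall (ht i)

theorem norm_prod_pow_le_of_mem_weightedPolydisc {ι : Type*} [Fintype ι] {w : ι → ℝ} {t : ℝ}
    (ht : 0 < t) {z : ι → ℂ} (hz : z ∈ weightedPolydisc w t) (d : ι → ℕ) :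
    ‖∏ i, z i ^ d i‖ ≤ t ^ ∑ i, (d i : ℝ) * w i := by
  rw [norm_prod, Real.rpow_sum_of_pos ht]
  refine Finset.prod_le_prod (fun _ _ => norm_nonneg _) fun i _ => ?_
  rw [norm_pow, mul_comm, Real.rpow_mul_natCast ht.le]
  exact pow_le_pow_left₀ (norm_nonneg _) (mem_closedBall_zero_iff.1 (hz i trivial)) _

namespace MvPolynomial

theorem finite_setOf_eval_cons_eq_zero {R : Type*} [CommRing R] [IsDomain R] {n : ℕ}
    {f : MvPolynomial (Fin (n + 1)) R} {s : Fin n → R}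
    (hs : eval s (finSuccEquiv R n f).leadingCoeff ≠ 0) :
    {y : R | eval (Fin.cons y s) f = 0}.Finite := by
  have hmap : (finSuccEquiv R n f).map (eval s) ≠ 0 := by
    intro h
    apply hs
    simpa using congrArg (Polynomial.coeff · (finSuccEquiv R n f).natDegree) h
  simp only [eval_eq_eval_mv_eval']
  exact Polynomial.finite_setOfPred_isRoot hmap

theorem ae_eval_ne_zero {n : ℕ} {f : MvPolynomial (Fin n) ℂ} (hf : f ≠ 0) :
    ∀ᵐ z ∂volume, eval z f ≠ 0 := by
  induction n with
  | zero =>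
    rw [eq_C_of_isEmpty f, Ne, C_eq_zero] at hf
    exact ae_of_all _ fun z => by rwa [eq_C_of_isEmpty f, eval_C]
  | succ n ih =>
    have hlc : (finSuccEquiv ℂ n f).leadingCoeff ≠ 0 := by
      simpa using (finSuccEquiv ℂ n).injective.ne hf
    have hmeas : MeasurableSet {q : ℂ × (Fin n → ℂ) | eval (Fin.cons q.1 q.2) f ≠ 0} :=
      (measurableSet_singleton 0).compl.preimage ((continuous_eval f).comp
        (continuous_fst.finCons continuous_snd)).measurable
    have hslices : ∀ᵐ s ∂volume, ∀ᵐ y ∂volume, eval (Fin.cons y s : Fin (n + 1) → ℂ) f ≠ 0 := by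
      filter_upwards [ih hlc] with s hs
      exact ae_iff.2 (by simpa using (finite_setOf_eval_cons_eq_zero hs).measure_zero volume)
    have hprod : ∀ᵐ q ∂(volume : Measure ℂ).prod volume,
        eval (Fin.cons q.1 q.2 : Fin (n + 1) → ℂ) f ≠ 0 :=
      (Measure.ae_prod_iff_ae_ae hmeas).2 ((Measure.ae_ae_comm (p := fun y s => _) hmeas).2 hslices)
    simpa [volume_pi] using (measurePreserving_piFinSuccAbove (fun _ => (volume : Measure ℂ)) 0)
      |>.quasiMeasurePreserving.ae hprod

theorem norm_eval_le_of_mem_weightedPolydisc {ι : Type*} [Fintype ι] {f : MvPolynomial ι ℂ}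
    {w : ι → ℝ} {W t : ℝ} (hW : ∀ m ∈ f.support, W ≤ ∑ i, (m i : ℝ) * w i)
    (ht0 : 0 < t) (ht1 : t ≤ 1) {z : ι → ℂ} (hz : z ∈ weightedPolydisc w t) :
    ‖eval z f‖ ≤ (∑ m ∈ f.support, ‖coeff m f‖) * t ^ W := by
  rw [eval_eq', Finset.sum_mul]
  refine (norm_sum_le _ _).trans (Finset.sum_le_sum fun m hm => ?_)
  rw [norm_mul]
  gcongr
  exact (norm_prod_pow_le_of_mem_weightedPolydisc ht0 hz m).trans
    (Real.rpow_le_rpow_of_exponent_ge ht0 ht1 (hW m hm))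

theorem ofReal_le_setLIntegral_norm_eval_rpow_neg {n : ℕ}
    {f : MvPolynomial (Fin n) ℂ} (hf : f ≠ 0) {w : Fin n → ℝ} {W c t : ℝ}
    (hW : ∀ m ∈ f.support, W ≤ ∑ i, (m i : ℝ) * w i) (hc : 0 ≤ c) (ht0 : 0 < t) (ht1 : t ≤ 1) :
    ENNReal.ofReal ((∑ m ∈ f.support, ‖coeff m f‖) ^ (-c) * Real.pi ^ n *
        t ^ (2 * ∑ i, w i - c * W)) ≤
      ∫⁻ z in weightedPolydisc w t, ENNReal.ofReal (‖eval z f‖ ^ (-c)) := by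
  set C := ∑ m ∈ f.support, ‖coeff m f‖
  have hC : 0 ≤ C := by positivity
  calc ENNReal.ofReal (C ^ (-c) * Real.pi ^ n * t ^ (2 * ∑ i, w i - c * W))
      = ENNReal.ofReal ((C * t ^ W) ^ (-c)) * volume (weightedPolydisc w t) := by
        rw [volume_weightedPolydisc w ht0, Fintype.card_fin, ← ENNReal.ofReal_mul (by positivity),
          Real.mul_rpow hC (by positivity), ← Real.rpow_mul ht0.le, sub_eq_add_neg,
          Real.rpow_add ht0, show W * -c = -(c * W) by ring]
        ring_nf
    _ = ∫⁻ _ in weightedPolydisc w t, ENNReal.ofReal ((C * t ^ W) ^ (-c)) :=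
        (setLIntegral_const _ _).symm
    _ ≤ ∫⁻ z in weightedPolydisc w t, ENNReal.ofReal (‖eval z f‖ ^ (-c)) := by
        -- `0 ^ (-c) = 0`, so the bound only holds off the zero set of `f`, which is null
        refine lintegral_mono_ae ((ae_restrict_iff' (measurableSet_weightedPolydisc w t)).2 ?_)
        filter_upwards [ae_eval_ne_zero hf] with z hz hzP
        exact ENNReal.ofReal_le_ofReal (Real.rpow_le_rpow_of_nonpos (norm_pos_iff.2 hz)
          (norm_eval_le_of_mem_weightedPolydisc hW ht0 ht1 hzP) (neg_nonpos.2 hc))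

end MvPolynomial

theorem nonneg_of_eventually_mul_rpow_le {K B e : ℝ} (hK : 0 < K)
    (h : ∀ᶠ t in 𝓝[>] 0, K * t ^ e ≤ B) : 0 ≤ e := by
  by_contra! he
  obtain ⟨t, hle, hgt⟩ :=
    (h.and (((tendsto_rpow_neg_nhdsGT_zero he).const_mul_atTop hK).eventually_gt_atTop B)).exists
  exact hle.not_gt hgt

theorem Finsupp.sum_natCast_mul_pos {ι R : Type*} [Fintype ι] [Semiring R] [PartialOrder R]
    [IsStrictOrderedRing R] {m : ι →₀ ℕ} (hm : m ≠ 0) {w : ι → R} (hw : ∀ i, 0 < w i) :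
    0 < ∑ i, (m i : R) * w i := by
  obtain ⟨i, hi⟩ := Finsupp.ne_iff.1 hm
  exact Finset.sum_pos' (fun j _ => by have := hw j; positivity)
    ⟨i, Finset.mem_univ i, mul_pos (by exact_mod_cast Nat.pos_of_ne_zero hi) (hw i)⟩

theorem stmt_16 (n : ℕ) (f : MvPolynomial (Fin n) ℂ) (hf : f ≠ 0)
    (h0 : MvPolynomial.eval (0 : Fin n → ℂ) f = 0)
    (w : Fin n → ℚ) (hw : ∀ i, 0 < w i) (wf : ℚ)
    (hmin : ∀ m ∈ f.support, wf ≤ ∑ i, (m i : ℚ) * w i)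
    (hatt : ∃ m ∈ f.support, wf = ∑ i, (m i : ℚ) * w i)
    (c : ℝ) (hc : 0 < c)
    (hint : ∃ U ∈ nhds (0 : Fin n → ℂ),
      IntegrableOn (fun z => ‖MvPolynomial.eval z f‖ ^ (-(2 * c))) U volume) :
    c ≤ (∑ i, (w i : ℝ)) / (wf : ℝ) := by
  obtain ⟨m₀, hm₀, hwf⟩ := hatt
  have hm₀ne : m₀ ≠ 0 := by
    rintro rfl
    rw [MvPolynomial.mem_support_iff, ← MvPolynomial.constantCoeff_eq,
      ← MvPolynomial.eval_zero] at hm₀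
    exact hm₀ h0
  have hwf_pos : (0 : ℝ) < wf := by exact_mod_cast hwf ▸ Finsupp.sum_natCast_mul_pos hm₀ne hw
  obtain ⟨U, hU, hfU⟩ := hint
  set C := ∑ m ∈ f.support, ‖MvPolynomial.coeff m f‖
  have hC : 0 < C := Finset.sum_pos (fun m hm => norm_pos_iff.2 (MvPolynomial.mem_support_iff.1 hm))
    (MvPolynomial.support_nonempty.2 hf)
  have hbound : ∀ᶠ t in 𝓝[>] 0, C ^ (-(2 * c)) * Real.pi ^ n *
      t ^ (2 * ∑ i, (w i : ℝ) - 2 * c * wf) ≤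
        (∫⁻ z in U, ENNReal.ofReal (‖MvPolynomial.eval z f‖ ^ (-(2 * c)))).toReal := by
    filter_upwards [eventually_weightedPolydisc_subset (w := fun i => (w i : ℝ))
      (fun i => by exact_mod_cast hw i) hU, Ioc_mem_nhdsGT one_pos] with t hsub ⟨ht0, ht1⟩
    rw [← ENNReal.ofReal_le_iff_le_toReal
      (ne_top_of_le_ne_top hfU.2.ne (lintegral_mono fun _ => Real.ofReal_le_enorm _))]
    exact (MvPolynomial.ofReal_le_setLIntegral_norm_eval_rpow_neg hf
      (fun m hm => by exact_mod_cast hmin m hm) (by positivity) ht0 ht1).trans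
      (lintegral_mono_set hsub)
  have hexp := nonneg_of_eventually_mul_rpow_le (by positivity) hbound
  rw [le_div_iff₀ hwf_pos]
  linarith
end

section
/- Let Q ⊂ ℙ⁴ be defined by x₀x₄ + x₁x₃ + x₂² = 0 and Y by x₀x₃³ + x₁x₂²x₃ = 0. For the one-parameter subgroup χ(t) = diag(t³, t³, t⁻², t⁻², t⁻²) of SL(5), the Hilbert–Mumford weights are μ(Q, χ) = 1 and μ(Y, χ) = −3, so that deg(Y)·μ(Q,χ) + deg(Q)·μ(Y,χ) = 4·1 + 2·(−3) = −2 < 0. -/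
open MvPolynomial

open Finsupp in
theorem stmt_18 :
    letI Q : MvPolynomial (Fin 5) ℂ := X 0 * X 4 + X 1 * X 3 + X 2 ^ 2
    letI Y : MvPolynomial (Fin 5) ℂ := X 0 * X 3 ^ 3 + X 1 * X 2 ^ 2 * X 3
    letI r : Fin 5 → ℤ := ![3, 3, -2, -2, -2]
    ((∀ m ∈ Q.support, ∑ i, (m i : ℤ) * r i ≤ 1) ∧
      (∃ m ∈ Q.support, ∑ i, (m i : ℤ) * r i = 1)) ∧
    ((∀ m ∈ Y.support, ∑ i, (m i : ℤ) * r i ≤ -3) ∧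
      (∃ m ∈ Y.support, ∑ i, (m i : ℤ) * r i = -3)) ∧
    (4 * (1 : ℤ) + 2 * (-3) = -2 ∧ (-2 : ℤ) < 0) := by
  set Q : MvPolynomial (Fin 5) ℂ := X 0 * X 4 + X 1 * X 3 + X 2 ^ 2 with hQ
  set Y : MvPolynomial (Fin 5) ℂ := X 0 * X 3 ^ 3 + X 1 * X 2 ^ 2 * X 3 with hY
  set r : Fin 5 → ℤ := ![3, 3, -2, -2, -2] with hr
  set a : Fin 5 →₀ ℕ := single 0 1 + single 4 1 with ha
  set b : Fin 5 →₀ ℕ := single 1 1 + single 3 1 with hb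
  set c : Fin 5 →₀ ℕ := single 2 2 with hc
  set d : Fin 5 →₀ ℕ := single 0 1 + single 3 3 with hd
  set e : Fin 5 →₀ ℕ := single 1 1 + (single 2 2 + single 3 1) with he
  have hQeq : Q = monomial a 1 + monomial b 1 + monomial c 1 := by
    simp [Q, ha, hb, hc, X, monomial_mul, pow_two, ← single_add]
  have hYeq : Y = monomial d 1 + monomial e 1 := by
    simp [Y, hd, he, X, monomial_mul, monomial_pow, Finsupp.smul_single, smul_eq_mul, one_pow, add_assoc]
  have hab : a ≠ b := by rw [Finsupp.ne_iff]; exact ⟨0, by simp [ha, hb]⟩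
  have hac : a ≠ c := by rw [Finsupp.ne_iff]; exact ⟨0, by simp [ha, hc]⟩
  have hde : d ≠ e := by rw [Finsupp.ne_iff]; exact ⟨0, by simp [hd, he]⟩
  have hsa : ∑ i, (a i : ℤ) * r i = 1 := by
    simp [ha, Fin.sum_univ_five, single_apply, r]
  have hsb : ∑ i, (b i : ℤ) * r i = 1 := by
    simp [hb, Fin.sum_univ_five, single_apply, r]
  have hsc : ∑ i, (c i : ℤ) * r i = -4 := by
    simp [hc, Fin.sum_univ_five, single_apply, r]
  have hsd : ∑ i, (d i : ℤ) * r i = -3 := by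
    simp [hd, Fin.sum_univ_five, single_apply, r]
  have hse : ∑ i, (e i : ℤ) * r i = -3 := by
    simp [he, Fin.sum_univ_five, single_apply, r]
  have hQsup : Q.support ⊆ {a, b, c} := by
    rw [hQeq]
    refine MvPolynomial.support_add.trans (Finset.union_subset (MvPolynomial.support_add.trans
      (Finset.union_subset ?_ ?_)) ?_) <;>
      simp [support_monomial, Finset.singleton_subset_iff]
  have hYsup : Y.support ⊆ {d, e} := by
    rw [hYeq]
    refine MvPolynomial.support_add.trans (Finset.union_subset ?_ ?_) <;>
      simp [support_monomial, Finset.singleton_subset_iff]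
  have haQ : a ∈ Q.support := by
    rw [MvPolynomial.mem_support_iff, hQeq]
    simp [coeff_monomial, coeff_add, Ne.symm hab, Ne.symm hac]
  have hdY : d ∈ Y.support := by
    rw [MvPolynomial.mem_support_iff, hYeq]
    simp [coeff_monomial, coeff_add, Ne.symm hde]
  refine ⟨⟨?_, ⟨a, haQ, hsa⟩⟩, ⟨?_, ⟨d, hdY, hsd⟩⟩, by norm_num⟩
  · intro m hm
    have := hQsup hm
    simp only [Finset.mem_insert, Finset.mem_singleton] at this
    rcases this with h | h | h <;> subst h <;> omega
  · intro m hm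
    have := hYsup hm
    simp only [Finset.mem_insert, Finset.mem_singleton] at this
    rcases this with h | h <;> subst h <;> omega
end
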